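/- arXiv:1511.04762 — 6 statements merged into one kernel-verified Lean document; each statement's English description precedes it below -/
import Mathlib

section
/- Let α be a type with decidable equality, let L be an even natural number, and let l : List α satisfy List.Chain' (· ≠ ·) l and l.length ≤ L. Then for every a : α, 2 * l.count a ≤ L. -/
/-! Pairing off adjacent entries, each pair holds at most one `a`, so `2 * count a ≤ length + 1`;
since `L` is even, `length ≤ L` absorbs the `+ 1`. -/

theorem List.IsChain.two_mul_count_le_length_add_one {α : Type*} [DecidableEq α] :
    ∀ {l : List α}, l.IsChain (· ≠ ·) → ∀ a : α, 2 * l.count a ≤ l.length + 1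
  | [], _, _ => by simp
  | [x], _, a => by
    rw [List.count_singleton]
    split <;> simp
  | x :: y :: t, h, a => by
    obtain ⟨hxy, hyt⟩ := List.isChain_cons_cons.mp h
    have ht : t.IsChain (· ≠ ·) := hyt.tail
    have ih := ht.two_mul_count_le_length_add_one a
    have hpair : (x :: y :: t).count a ≤ t.count a + 1 := by
      simp only [List.count_cons, beq_iff_eq]
      split_ifs <;> simp_all
    simp only [List.length_cons]
    omega

theorem valid_bin_count_le_of_even_capacity {α : Type*} [DecidableEq α] (L : ℕ)
    (hL : Even L) (l : List α) (h : List.Chain' (· ≠ ·) l) (hlen : l.length ≤ L) (a : α) :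
    2 * l.count a ≤ L := by
  have hcount := List.IsChain.two_mul_count_le_length_add_one h a
  obtain ⟨k, rfl⟩ := hL
  omega
end

section
/- Let α be a type with decidable equality, s : Multiset α, and bins : List (List α) a valid packing of s, i.e., (bins.map (fun b => (b : Multiset α))).sum = s and every b ∈ bins satisfies List.Chain' (· ≠ ·) b. Then for every color a : α, 2 * s.count a ≤ Multiset.card s + bins.length. In particular, the number of bins in any valid packing is at least the discrepancy s.count a − (Multiset.card s − s.count a). -/
/-!
In a bin with no two adjacent items of the same colour, the items of colour `a` occupy pairwise
non-adjacent positions, so a bin of length `n` holds at most `⌈n / 2⌉` of them, i.e.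
`2 * count a ≤ n + 1`. Summing over the bins gives `2 * s.count a ≤ card s + #bins`.
-/

theorem List.two_mul_count_le_length_add_one_of_isChain_ne {α : Type*} [DecidableEq α] (a : α) :
    ∀ l : List α, l.IsChain (· ≠ ·) → 2 * l.count a ≤ l.length + 1
  | [], _ => by simp
  | [x], _ => by by_cases h : x = a <;> simp [h]
  | x :: y :: t, h => by
      obtain ⟨hxy, hyt⟩ := List.isChain_cons_cons.mp h
      have ih := two_mul_count_le_length_add_one_of_isChain_ne a t hyt.tail
      simp only [List.count_cons, List.length_cons, beq_iff_eq]
      by_cases hx : x = a <;> by_cases hy : y = a <;> simp_all <;> omega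

theorem two_mul_count_sum_le_card_add_length {α : Type*} [DecidableEq α] (a : α)
    (bins : List (List α)) (hvalid : ∀ b ∈ bins, b.IsChain (· ≠ ·)) :
    2 * (bins.map Multiset.ofList).sum.count a ≤
      Multiset.card (bins.map Multiset.ofList).sum + bins.length := by
  induction bins with
  | nil => simp
  | cons b bins ih =>
    have hb := List.two_mul_count_le_length_add_one_of_isChain_ne a b (hvalid b (by simp))
    have hbins := ih fun c hc => hvalid c (List.mem_cons_of_mem b hc)
    simp only [List.map_cons, List.sum_cons, Multiset.count_add, Multiset.card_add,
      Multiset.coe_count, Multiset.coe_card, List.length_cons]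
    omega

theorem packing_discrepancy_lower_bound {α : Type*} [DecidableEq α] (s : Multiset α)
    (bins : List (List α))
    (hsum : (bins.map (fun b => (b : Multiset α))).sum = s)
    (hvalid : ∀ b ∈ bins, List.Chain' (· ≠ ·) b) :
    ∀ a : α, 2 * s.count a ≤ Multiset.card s + bins.length ∧
      s.count a - (Multiset.card s - s.count a) ≤ bins.length := by
  intro a
  -- The coercion in `hsum` elaborates through the list monad, as `(bins >>= fun b => pure ↑b).map id`.
  simp only [List.pure_def, List.bind_eq_flatMap, List.map_id_fun', id_eq,
    ← List.map_eq_flatMap] at hsum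
  have h := hsum ▸ two_mul_count_sum_le_card_add_length a bins hvalid
  exact ⟨h, by omega⟩
end

section
/- Let α be a type with decidable equality and s : Multiset α a nonempty multiset such that for every color a : α, 2 * s.count a ≤ Multiset.card s + 1. Then there exists a list l : List α with (l : Multiset α) = s and List.Chain' (· ≠ ·) l; i.e., all items can be packed into a single valid bin. -/
/-!
Greedy construction: repeatedly append the most frequent remaining color that differs from the
last color placed. The invariant is that the remaining multiset `t` is balanced
(`2 * t.count x ≤ card t + 1` for all `x`) and the last color placed fills at most half of `t`,
so some other color is available. Removing one copy of the most frequent admissible color `a`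
keeps `t` balanced: every other color `x` is either the last color placed or has
`count x ≤ count a`, and in both cases `2 * count x ≤ card t`; and `a` itself then fills at most
half of what is left.
-/

namespace Multiset

variable {α : Type*} [DecidableEq α]

theorem count_add_count_le_card (s : Multiset α) {x a : α} (h : x ≠ a) :
    s.count x + s.count a ≤ card s :=
  calc s.count x + s.count a = (s.filter (· ≠ a)).count x + (s.filter (· = a)).count a := by
        rw [count_filter_of_pos (p := (· ≠ a)) h, count_filter_of_pos (p := (· = a)) rfl]
    _ ≤ card (s.filter (· ≠ a)) + card (s.filter (· = a)) :=
        add_le_add (count_le_card _ _) (count_le_card _ _)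
    _ = card s := by rw [add_comm, ← card_add, filter_add_not]

theorem two_mul_count_le_card_of_count_le {s : Multiset α} {x a : α} (hxa : x ≠ a)
    (h : s.count x ≤ s.count a) : 2 * s.count x ≤ card s := by
  have := s.count_add_count_le_card hxa
  omega

theorem exists_mem_forall_count_le {s : Multiset α} (hs : s ≠ 0) :
    ∃ a ∈ s, ∀ x, s.count x ≤ s.count a := by
  obtain ⟨a, ha, hmax⟩ := s.exists_max_image s.count hs
  refine ⟨a, ha, fun x => ?_⟩
  by_cases hx : x ∈ s
  · exact hmax x hx
  · simp [count_eq_zero_of_notMem hx]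

theorem exists_mem_ne_forall_ne_count_le {s : Multiset α} {b : α} (hs : s ≠ 0)
    (hb : 2 * s.count b ≤ card s) : ∃ a ∈ s, a ≠ b ∧ ∀ x ≠ b, s.count x ≤ s.count a := by
  have hfilter : s.filter (· ≠ b) ≠ 0 := by
    intro h
    have hall : s.count b = card s := count_eq_card.mpr fun x hx =>
      (not_not.mp (filter_eq_nil.mp h x hx)).symm
    have : card s ≠ 0 := by simpa using hs
    omega
  obtain ⟨a, ha, hmax⟩ := exists_mem_forall_count_le hfilter
  obtain ⟨has, hab⟩ := mem_filter.mp ha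
  refine ⟨a, has, hab, fun x hxb => ?_⟩
  simpa only [count_filter_of_pos (p := (· ≠ b)) hxb, count_filter_of_pos (p := (· ≠ b)) hab]
    using hmax x

theorem two_mul_count_erase_le {s : Multiset α} {a : α} (ha : a ∈ s)
    (hac : 2 * s.count a ≤ card s + 1) (hx : ∀ x ≠ a, 2 * s.count x ≤ card s) :
    (∀ x, 2 * (s.erase a).count x ≤ card (s.erase a) + 1) ∧
      2 * (s.erase a).count a ≤ card (s.erase a) := by
  have hcard := card_erase_add_one ha
  have hpos := one_le_count_iff_mem.mpr ha
  refine ⟨fun x => ?_, by rw [count_erase_self]; omega⟩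
  by_cases hxa : x = a
  · subst hxa
    rw [count_erase_self]
    omega
  · rw [count_erase_of_ne hxa]
    have := hx x hxa
    omega

theorem exists_isChain_ne_cons (s : Multiset α) (b : α)
    (hs : ∀ x, 2 * s.count x ≤ card s + 1) (hb : 2 * s.count b ≤ card s) :
    ∃ l : List α, (l : Multiset α) = s ∧ (b :: l).IsChain (· ≠ ·) := by
  induction hn : card s generalizing s b with
  | zero => exact ⟨[], (card_eq_zero.mp hn).symm, .singleton b⟩
  | succ n ih =>
    have hs0 : s ≠ 0 := by rintro rfl; simp at hn
    obtain ⟨a, ha, hab, hmax⟩ := exists_mem_ne_forall_ne_count_le hs0 hb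
    have hx : ∀ x ≠ a, 2 * s.count x ≤ card s := fun x hxa => by
      by_cases hxb : x = b
      · exact hxb ▸ hb
      · exact two_mul_count_le_card_of_count_le hxa (hmax x hxb)
    obtain ⟨hs', ha'⟩ := two_mul_count_erase_le ha (hs a) hx
    have hn' : card (s.erase a) = n := by have := card_erase_add_one ha; omega
    obtain ⟨l, hl, hchain⟩ := ih (s.erase a) a hs' ha' hn'
    refine ⟨a :: l, ?_, .cons_cons (Ne.symm hab) hchain⟩
    rw [← cons_coe, hl, cons_erase ha]

end Multiset

theorem single_bin_of_low_discrepancy_general {α : Type*} [DecidableEq α] (s : Multiset α)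
    (hdisc : ∀ a : α, 2 * s.count a ≤ Multiset.card s + 1) :
    ∃ l : List α, (l : Multiset α) = s ∧ List.Chain' (· ≠ ·) l := by
  rcases eq_or_ne s 0 with rfl | hs
  · exact ⟨[], rfl, .nil⟩
  obtain ⟨a, ha, hmax⟩ := Multiset.exists_mem_forall_count_le hs
  obtain ⟨hs', ha'⟩ := Multiset.two_mul_count_erase_le ha (hdisc a)
    fun x hxa => Multiset.two_mul_count_le_card_of_count_le hxa (hmax x)
  obtain ⟨l, hl, hchain⟩ := Multiset.exists_isChain_ne_cons (s.erase a) a hs' ha'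
  refine ⟨a :: l, ?_, hchain⟩
  rw [← Multiset.cons_coe, hl, Multiset.cons_erase ha]

theorem single_bin_of_low_discrepancy {α : Type*} [DecidableEq α] (s : Multiset α)
    (hne : s ≠ 0)
    (hdisc : ∀ a : α, 2 * s.count a ≤ Multiset.card s + 1) :
    ∃ l : List α, (l : Multiset α) = s ∧ List.Chain' (· ≠ ·) l :=
  single_bin_of_low_discrepancy_general s hdisc
end

section
/- Let α be a type with decidable equality, s : Multiset α a nonempty multiset, and m : α a most frequent color of s (for all a : α, s.count a ≤ s.count m). Set n = Multiset.card s and k = max 1 (2 * s.count m - n) (natural-number truncated subtraction). Then: (i) there exists a valid packing of s into k bins, and (ii) every valid packing of s uses at least k bins. Hence k is the minimum number of bins for zero-weight Colored Bin Packing of s. -/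
/-!
A bin is a chain, so every color fills at most every other place of it: a bin of length `ℓ`
holds at most `(ℓ + 1) / 2` items of color `m`, and a packing into `k` bins gives
`2 * count m ≤ card s + k`.

Conversely, a multiset in which no color takes more than half of the places (rounded up) can be
laid out as a single chain, greedily: always put down a most frequent color different from the
previous one. Splitting off `2 * count m - card s - 1` singleton bins `[m]` leaves such a multiset.
-/

open Multiset

namespace ColoredBinPacking

def IsPacking {α : Type*} (s : Multiset α) (bins : List (List α)) : Prop :=
  (bins.map ofList).sum = s ∧ ∀ b ∈ bins, b.IsChain (· ≠ ·)

theorem IsPacking.length_pos {α : Type*} {s : Multiset α} {bins : List (List α)}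
    (h : IsPacking s bins) (hs : s ≠ 0) : 0 < bins.length := by
  rcases bins with _ | ⟨b, bins⟩
  · exact absurd h.1.symm hs
  · simp

variable {α : Type*} [DecidableEq α]

theorem count_add_count_le_card (t : Multiset α) {a b : α} (hab : a ≠ b) :
    t.count a + t.count b ≤ card t := by
  have hle : replicate (t.count a) a + replicate (t.count b) b ≤ t := le_iff_count.2 fun x => by
    by_cases hxa : x = a <;> by_cases hxb : x = b <;> simp_all [count_replicate, eq_comm]
  simpa using card_le_card hle

theorem two_mul_count_le_card_of_count_le (t : Multiset α) {a b : α} (hab : a ≠ b)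
    (h : t.count b ≤ t.count a) : 2 * t.count b ≤ card t := by
  have := count_add_count_le_card t hab
  omega

theorem exists_mem_forall_count_le (t : Multiset α) (P : α → Prop) [DecidablePred P]
    (h : ∃ a ∈ t, P a) : ∃ a ∈ t, P a ∧ ∀ b, P b → t.count b ≤ t.count a := by
  obtain ⟨a, ha, hmax⟩ :=
    (t.toFinset.filter P).exists_max_image t.count (by simpa [Finset.Nonempty] using h)
  rw [Finset.mem_filter, mem_toFinset] at ha
  refine ⟨a, ha.1, ha.2, fun b hPb => ?_⟩
  by_cases hb : b ∈ t
  · exact hmax b (by simp [hb, hPb])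
  · simp [count_eq_zero_of_notMem hb]

theorem two_mul_count_le_length_add_one (a : α) :
    ∀ {l : List α}, l.IsChain (· ≠ ·) → 2 * l.count a ≤ l.length + 1
  | [], _ => by simp
  | [x], _ => by by_cases x = a <;> simp_all
  | x :: y :: l, h => by
    have ih := two_mul_count_le_length_add_one a (List.isChain_cons_cons.1 h).2.tail
    have hxy : x ≠ y := (List.isChain_cons_cons.1 h).1
    simp only [List.count_cons, List.length_cons, beq_iff_eq]
    by_cases hx : x = a <;> by_cases hy : y = a <;> simp_all <;> omega

theorem IsPacking.two_mul_count_le {s : Multiset α} {bins : List (List α)} (h : IsPacking s bins)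
    (a : α) : 2 * s.count a ≤ card s + bins.length := by
  induction bins generalizing s with
  | nil =>
    obtain ⟨rfl, -⟩ := h
    simp
  | cons b bins ih =>
    obtain ⟨rfl, hchain⟩ := h
    have hb := two_mul_count_le_length_add_one a (hchain b List.mem_cons_self)
    have hbins := ih ⟨rfl, fun c hc => hchain c (List.mem_cons_of_mem b hc)⟩
    simp only [List.map_cons, List.sum_cons, count_add, card_add, coe_count, coe_card,
      List.length_cons]
    omega

def Balanced (t : Multiset α) : Prop :=
  ∀ a, 2 * t.count a ≤ card t + 1

theorem Balanced.erase {t : Multiset α} (ht : Balanced t) {a : α} (ha : a ∈ t)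
    (hothers : ∀ b ≠ a, 2 * t.count b ≤ card t) :
    Balanced (t.erase a) ∧ 2 * (t.erase a).count a ≤ card (t.erase a) := by
  have hcard : card (t.erase a) + 1 = card t := card_erase_add_one ha
  have hself : 2 * (t.erase a).count a ≤ card (t.erase a) := by
    have := ht a
    have := count_erase_self a t
    have := count_pos.2 ha
    omega
  refine ⟨fun b => ?_, hself⟩
  by_cases hba : b = a
  · subst hba; omega
  · rw [count_erase_of_ne hba]
    have := hothers b hba
    omega

theorem isChain_cons_of_coe_eq_erase {t : Multiset α} {a : α} (ha : a ∈ t) {l : List α}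
    (hl : (l : Multiset α) = t.erase a) (hc : l.IsChain (· ≠ ·)) (hhead : a ∉ l.head?) :
    ((a :: l : List α) : Multiset α) = t ∧ (a :: l).IsChain (· ≠ ·) := by
  refine ⟨by rw [← cons_coe, hl, cons_erase ha], List.isChain_cons.2 ⟨?_, hc⟩⟩
  rintro y hy rfl
  exact hhead hy

/-- Start with a most frequent color other than `p`; afterwards only that color can still take
more than half of the places, and it is forbidden at the head of the rest. -/
theorem Balanced.exists_isChain_head_ne {t : Multiset α} (ht : Balanced t) {p : α}
    (hp : 2 * t.count p ≤ card t) :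
    ∃ l : List α, (l : Multiset α) = t ∧ l.IsChain (· ≠ ·) ∧ p ∉ l.head? := by
  induction t using strongInductionOn generalizing p with
  | ih t ih =>
  rcases eq_or_ne t 0 with rfl | hne
  · exact ⟨[], rfl, List.isChain_nil, by simp⟩
  have hnot : ∃ a ∈ t, a ≠ p := by
    by_contra! hall
    have := count_eq_card.2 fun x hx => (hall x hx).symm
    have := card_pos.2 hne
    omega
  obtain ⟨a, ha, hap, hmax⟩ := exists_mem_forall_count_le t (· ≠ p) hnot
  have hothers : ∀ b ≠ a, 2 * t.count b ≤ card t := fun b hba => by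
    by_cases hbp : b = p
    · exact hbp ▸ hp
    · exact two_mul_count_le_card_of_count_le t (Ne.symm hba) (hmax b hbp)
  obtain ⟨hbal, hself⟩ := ht.erase ha hothers
  obtain ⟨l, hl, hc, hhead⟩ := ih _ (erase_lt.2 ha) hbal hself
  obtain ⟨hcoe, hchain⟩ := isChain_cons_of_coe_eq_erase ha hl hc hhead
  exact ⟨a :: l, hcoe, hchain, by simpa using hap⟩

theorem Balanced.exists_isChain {t : Multiset α} (ht : Balanced t) :
    ∃ l : List α, (l : Multiset α) = t ∧ l.IsChain (· ≠ ·) := by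
  rcases eq_or_ne t 0 with rfl | hne
  · exact ⟨[], rfl, List.isChain_nil⟩
  obtain ⟨a, ha, -, hmax⟩ :=
    exists_mem_forall_count_le t (fun _ => True) (by simpa using exists_mem_of_ne_zero hne)
  obtain ⟨hbal, hself⟩ := ht.erase ha fun b hba =>
    two_mul_count_le_card_of_count_le t (Ne.symm hba) (hmax b trivial)
  obtain ⟨l, hl, hc, hhead⟩ := hbal.exists_isChain_head_ne hself
  obtain ⟨hcoe, hchain⟩ := isChain_cons_of_coe_eq_erase ha hl hc hhead
  exact ⟨a :: l, hcoe, hchain⟩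

theorem exists_isPacking_replicate_singleton_append {s : Multiset α} {m : α} {j : ℕ}
    (hj : j ≤ s.count m) (hbal : Balanced (s - replicate j m)) :
    ∃ l : List α, IsPacking s (List.replicate j [m] ++ [l]) := by
  obtain ⟨l, hl, hc⟩ := hbal.exists_isChain
  refine ⟨l, ?_, ?_⟩
  · simp [hl, nsmul_singleton, add_tsub_cancel_of_le (le_count_iff_replicate_le.1 hj)]
  · simp only [List.mem_append, List.mem_replicate, List.mem_singleton]
    rintro b (⟨-, rfl⟩ | rfl)
    exacts [List.isChain_singleton m, hc]

theorem balanced_sub_replicate {s : Multiset α} {m : α} (hmax : ∀ a, s.count a ≤ s.count m) :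
    Balanced (s - replicate (2 * s.count m - card s - 1) m) := by
  have hm := count_le_card m s
  intro a
  rw [count_sub, count_replicate,
    card_sub (le_count_iff_replicate_le.1 (by omega)), card_replicate]
  by_cases ham : a = m
  · subst ham
    rw [if_pos rfl]
    omega
  · have := count_add_count_le_card s ham
    have := hmax a
    rw [if_neg (Ne.symm ham)]
    omega

end ColoredBinPacking

open ColoredBinPacking in
theorem alternate_zero_optimal {α : Type*} [DecidableEq α] (s : Multiset α)
    (hne : s ≠ 0) (m : α) (hmax : ∀ a : α, s.count a ≤ s.count m) :
    (∃ bins : List (List α),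
        bins.length = max 1 (2 * s.count m - Multiset.card s) ∧
        (bins.map (fun b => (b : Multiset α))).sum = s ∧
        ∀ b ∈ bins, List.Chain' (· ≠ ·) b) ∧
    (∀ bins : List (List α),
        (bins.map (fun b => (b : Multiset α))).sum = s →
        (∀ b ∈ bins, List.Chain' (· ≠ ·) b) →
        max 1 (2 * s.count m - Multiset.card s) ≤ bins.length) := by
  have hm := count_le_card m s
  obtain ⟨l, hsum, hchain⟩ :=
    exists_isPacking_replicate_singleton_append (by omega) (balanced_sub_replicate hmax)
  -- The coercion in the statement elaborates as a monadic lift `(bins >>= pure ∘ ofList).map id`.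
  refine ⟨⟨_, ?_, by simpa [← List.map_eq_flatMap] using hsum, hchain⟩,
    fun bins hsum hchain => ?_⟩
  · simp only [List.length_append, List.length_replicate, List.length_singleton]
    omega
  · have hpack : IsPacking s bins :=
      ⟨by simpa [← List.map_eq_flatMap, Function.comp_def] using hsum, hchain⟩
    have := hpack.two_mul_count_le m
    have := hpack.length_pos hne
    omega
end

section
/- Let α be a type with decidable equality, L an odd natural number with L ≥ 3, s : Multiset α, and m : α. Set n = Multiset.card s, O = n - s.count m, and suppose D = s.count m - O > 0 and D ≤ (O + (L-1)/2 - 1) / ((L-1)/2) (i.e., D ≤ ⌈O / ⌊L/2⌋⌉). Then the minimum number of bins in a valid capacity-L packing of s equals D + ((n - D*L) + L - 1) / L (i.e., D + ⌈(n − D·L)/L⌉, with natural-number truncated subtraction). -/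
/-!
Let `M = O + D` be the number of `m`-items. In a bin of length `ℓ` without equal neighbours at
most `(ℓ + 1) / 2` items are `m`, so any packing into `k` bins has `2M ≤ n + k`, i.e. `D ≤ k`;
with `n ≤ kL` this forces `k ≥ D + ⌈(n - DL)/L⌉`. Conversely, for `L = 2h + 1` the bins
`m o m … o m`, each with up to `h` other items, absorb the excess `D` of `m` in `D` bins, and the
remaining `2(O - Dh) = n - DL` items, arranged as `o m o m …`, are cut into pieces of length `L`.
-/

namespace List

variable {α : Type*}

theorem two_mul_count_le_length_add_one [DecidableEq α] (a : α) :
    ∀ {l : List α}, l.IsChain (· ≠ ·) → 2 * l.count a ≤ l.length + 1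
  | [], _ => by simp
  | [b], _ => by by_cases hb : b = a <;> simp [hb]
  | b :: c :: t, hl => by
      obtain ⟨hbc, hct⟩ := isChain_cons_cons.mp hl
      have ih := two_mul_count_le_length_add_one a hct.tail
      by_cases hb : b = a <;> by_cases hc : c = a <;> simp_all <;> omega

def chunks (n : ℕ) : List α → List (List α)
  | [] => []
  | a :: l => (a :: l.take (n - 1)) :: chunks n (l.drop (n - 1))
  termination_by l => l.length
  decreasing_by simp

variable (n : ℕ)

@[simp] theorem chunks_nil : ([] : List α).chunks n = [] := by simp [chunks]

theorem chunks_cons (a : α) (l : List α) :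
    (a :: l).chunks n = (a :: l.take (n - 1)) :: (l.drop (n - 1)).chunks n := by
  simp [chunks]

theorem flatten_chunks (l : List α) : (l.chunks n).flatten = l := by
  induction l using chunks.induct n with
  | case1 => simp
  | case2 a l ih => simp [chunks_cons, ih]

theorem length_chunks {n : ℕ} (hn : 0 < n) (l : List α) :
    (l.chunks n).length = l.length ⌈/⌉ n := by
  induction l using chunks.induct n with
  | case1 => simp
  | case2 a l ih =>
    simp only [chunks_cons, length_cons, ih, length_drop, Nat.ceilDiv_eq_add_pred_div]
    rcases le_or_gt (n - 1) l.length with h | h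
    · rw [show l.length + 1 + n - 1 = l.length - (n - 1) + n - 1 + n by omega,
        Nat.add_div_right _ hn]
    · rw [Nat.div_eq_of_lt (by omega), show l.length + 1 + n - 1 = l.length + 1 - 1 + n by omega,
        Nat.add_div_right _ hn, Nat.div_eq_of_lt (by omega)]

theorem infix_of_mem_chunks {l b : List α} (hb : b ∈ l.chunks n) : b <:+: l := by
  induction l using chunks.induct n with
  | case1 => simp at hb
  | case2 a l ih =>
    rw [chunks_cons, mem_cons] at hb
    rcases hb with rfl | hb
    · exact (prefix_cons_inj a |>.mpr (take_prefix _ l)).isInfix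
    · exact (ih hb).trans ((drop_suffix _ l).isInfix.trans (suffix_cons a l).isInfix)

theorem length_le_of_mem_chunks {n : ℕ} (hn : 0 < n) {l b : List α} (hb : b ∈ l.chunks n) :
    b.length ≤ n := by
  induction l using chunks.induct n with
  | case1 => simp at hb
  | case2 a l ih =>
    rw [chunks_cons, mem_cons] at hb
    rcases hb with rfl | hb
    · simp only [length_cons, length_take]; omega
    · exact ih hb

def alternate (m : α) (l : List α) : List α := l.flatMap fun o => [o, m]

@[simp] theorem length_alternate (m : α) (l : List α) :
    (l.alternate m).length = 2 * l.length := by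
  induction l with
  | nil => simp [alternate]
  | cons o l ih =>
    simp only [alternate, flatMap_cons, length_append, length_cons, length_nil] at ih ⊢
    omega

theorem coe_alternate (m : α) (l : List α) :
    ((l.alternate m : List α) : Multiset α) = Multiset.replicate l.length m + l := by
  induction l with
  | nil => simp [alternate]
  | cons o l ih =>
    simp only [alternate, flatMap_cons, ← Multiset.coe_add] at ih ⊢
    rw [ih, length_cons, Multiset.replicate_succ, ← Multiset.cons_coe, ← Multiset.cons_coe,
      ← Multiset.cons_coe, ← Multiset.singleton_add, ← Multiset.singleton_add,
      ← Multiset.singleton_add, ← Multiset.singleton_add]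
    abel

theorem isChain_cons_alternate {m : α} {l : List α} (hl : ∀ o ∈ l, o ≠ m) :
    (m :: l.alternate m).IsChain (· ≠ ·) := by
  induction l with
  | nil => exact isChain_singleton m
  | cons o l ih =>
    simp only [forall_mem_cons] at hl
    simpa [alternate, isChain_cons_cons, hl.1, hl.1.symm] using ih hl.2

end List

section Packing

variable {α : Type*}

def IsColoredPacking (L : ℕ) (s : Multiset α) (bins : List (List α)) : Prop :=
  (bins.flatten : Multiset α) = s ∧ ∀ b ∈ bins, b.length ≤ L ∧ b.IsChain (· ≠ ·)

namespace IsColoredPacking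

variable {L : ℕ} {s : Multiset α} {bins : List (List α)}

theorem cons {b : List α} (hb : b.length ≤ L) (hc : b.IsChain (· ≠ ·))
    (h : IsColoredPacking L s bins) : IsColoredPacking L ((b : Multiset α) + s) (b :: bins) :=
  ⟨by rw [List.flatten_cons, ← Multiset.coe_add, h.1],
    List.forall_mem_cons.mpr ⟨⟨hb, hc⟩, h.2⟩⟩

theorem chunks (hL : 0 < L) {l : List α} (hl : l.IsChain (· ≠ ·)) :
    IsColoredPacking L l (l.chunks L) :=
  ⟨by rw [List.flatten_chunks],
    fun _ hb => ⟨List.length_le_of_mem_chunks hL hb,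
      hl.infix (List.infix_of_mem_chunks L hb)⟩⟩

theorem card_le (h : IsColoredPacking L s bins) : Multiset.card s ≤ bins.length * L := by
  rw [← h.1, Multiset.coe_card, List.length_flatten]
  simpa using List.sum_le_card_nsmul (bins.map List.length) L
    (by simpa using fun b hb => (h.2 b hb).1)

theorem two_mul_count_le [DecidableEq α] (h : IsColoredPacking L s bins) (a : α) :
    2 * s.count a ≤ Multiset.card s + bins.length := by
  rw [← h.1, Multiset.coe_card, Multiset.coe_count, List.length_flatten, List.count_flatten]
  calc 2 * (bins.map (List.count a)).sum
      = (bins.map fun b => 2 * b.count a).sum := (List.sum_map_mul_left ..).symm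
    _ ≤ (bins.map fun b => b.length + 1).sum :=
        List.sum_le_sum fun b hb => List.two_mul_count_le_length_add_one a (h.2 b hb).2
    _ = (bins.map List.length).sum + bins.length := by simp [List.sum_map_add]

end IsColoredPacking

theorem exists_isColoredPacking_alternating (h : ℕ) (m : α) (D : ℕ) {os : List α}
    (hos : ∀ o ∈ os, o ≠ m) :
    ∃ bins, IsColoredPacking (2 * h + 1)
        (Multiset.replicate (os.length + D) m + (os : Multiset α)) bins ∧
      bins.length = D + 2 * (os.length - D * h) ⌈/⌉ (2 * h + 1) := by
  induction D generalizing os with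
  | zero =>
    refine ⟨(os.alternate m).chunks (2 * h + 1),
      ?_, by rw [List.length_chunks (by omega), List.length_alternate]; simp⟩
    simpa [List.coe_alternate] using
      IsColoredPacking.chunks (by omega) (List.isChain_cons_alternate hos).tail
  | succ D ih =>
    obtain ⟨bins, hp, hlen⟩ := ih (os := os.drop h) fun o ho => hos o (List.mem_of_mem_drop ho)
    refine ⟨(m :: (os.take h).alternate m) :: bins, ?_, ?_⟩
    · have hbin := hp.cons (b := m :: (os.take h).alternate m)
        (by simp only [List.length_cons, List.length_alternate, List.length_take]; omega)
        (List.isChain_cons_alternate fun o ho => hos o (List.mem_of_mem_take ho))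
      convert hbin using 1
      have hlen_os : os.length = (os.take h).length + (os.drop h).length := by
        rw [List.length_take, List.length_drop]; omega
      have hcoe_os : (os : Multiset α) = ↑(os.take h) + ↑(os.drop h) := by
        rw [Multiset.coe_add, List.take_append_drop]
      rw [hlen_os, hcoe_os, ← Multiset.cons_coe, List.coe_alternate, ← Multiset.singleton_add]
      simp only [Multiset.replicate_add, Multiset.replicate_one]
      abel
    · rw [List.length_cons, hlen, List.length_drop, Nat.sub_sub,
        show h + D * h = (D + 1) * h by ring]
      omega

end Packing

/-- `(b : Multiset α)` under `List.map` elaborates through the coercion lift of the list monad,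
whence the `pure`/`bind` normalisation. -/
theorem sum_map_coe_eq_coe_flatten {α : Type*} (bins : List (List α)) :
    (bins.map (fun b => (b : Multiset α))).sum = bins.flatten := by
  induction bins with
  | nil => rfl
  | cons b bins ih =>
    simp only [List.pure_def, List.bind_eq_flatMap, List.map_id_fun', id_eq] at ih ⊢
    rw [List.flatMap_cons, List.sum_append, ih, List.flatten_cons, ← Multiset.coe_add,
      List.sum_singleton]

theorem Nat.add_ceilDiv_sub_mul_le {D k n L : ℕ} (hL : 0 < L) (hD : D ≤ k) (hn : n ≤ k * L) :
    D + (n - D * L) ⌈/⌉ L ≤ k := by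
  have : (n - D * L) ⌈/⌉ L ≤ k - D := by
    rw [ceilDiv_le_iff_le_mul hL, Nat.mul_sub, mul_comm L k, mul_comm L D]
    omega
  omega

theorem alternate_unit_optimal_odd_reducible_general {α : Type*} [DecidableEq α]
    (L : ℕ) (hodd : Odd L) (s : Multiset α) (m : α)
    (n O D : ℕ) (hn : n = Multiset.card s) (hO : O = n - s.count m)
    (hD : D = s.count m - O) (hDpos : 0 < D) :
    (∃ bins : List (List α),
        bins.length = D + ((n - D * L) + L - 1) / L ∧
        (bins.map (fun b => (b : Multiset α))).sum = s ∧
        ∀ b ∈ bins, b.length ≤ L ∧ List.Chain' (· ≠ ·) b) ∧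
    (∀ bins : List (List α),
        (bins.map (fun b => (b : Multiset α))).sum = s →
        (∀ b ∈ bins, b.length ≤ L ∧ List.Chain' (· ≠ ·) b) →
        D + ((n - D * L) + L - 1) / L ≤ bins.length) := by
  simp only [← Nat.ceilDiv_eq_add_pred_div, sum_map_coe_eq_coe_flatten]
  obtain ⟨h, rfl⟩ := hodd
  set os := (s.filter (· ≠ m)).toList
  have hsplit : s = Multiset.replicate (s.count m) m + os := by
    rw [Multiset.coe_toList, ← Multiset.filter_eq', Multiset.filter_add_not]
  have hcount : s.count m = os.length + D := by
    have := congrArg Multiset.card hsplit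
    simp only [Multiset.card_add, Multiset.card_replicate, Multiset.coe_card] at this
    omega
  constructor
  · obtain ⟨bins, hp, hlen⟩ :=
      exists_isColoredPacking_alternating h m D (os := os) (by simp [os])
    refine ⟨bins, ?_, by rw [hp.1, hsplit, hcount], hp.2⟩
    rw [hlen, show n - D * (2 * h + 1) = 2 * (os.length - D * h) by
      rw [show D * (2 * h + 1) = 2 * (D * h) + D by ring]; omega]
  · intro bins hsum hvalid
    have hp : IsColoredPacking (2 * h + 1) s bins := ⟨hsum, hvalid⟩
    have hcount_le := hp.two_mul_count_le m
    exact Nat.add_ceilDiv_sub_mul_le (by omega) (by omega) (hn ▸ hp.card_le)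

theorem alternate_unit_optimal_odd_reducible {α : Type*} [DecidableEq α]
    (L : ℕ) (hodd : Odd L) (hL : 3 ≤ L) (s : Multiset α) (m : α)
    (n O D : ℕ) (hn : n = Multiset.card s) (hO : O = n - s.count m)
    (hD : D = s.count m - O) (hDpos : 0 < D)
    (hred : D ≤ (O + (L - 1) / 2 - 1) / ((L - 1) / 2)) :
    (∃ bins : List (List α),
        bins.length = D + ((n - D * L) + L - 1) / L ∧
        (bins.map (fun b => (b : Multiset α))).sum = s ∧
        ∀ b ∈ bins, b.length ≤ L ∧ List.Chain' (· ≠ ·) b) ∧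
    (∀ bins : List (List α),
        (bins.map (fun b => (b : Multiset α))).sum = s →
        (∀ b ∈ bins, b.length ≤ L ∧ List.Chain' (· ≠ ·) b) →
        D + ((n - D * L) + L - 1) / L ≤ bins.length) :=
  alternate_unit_optimal_odd_reducible_general L hodd s m n O D hn hO hD hDpos
end

section
/- Let α be a type with decidable equality, L an odd natural number with L ≥ 3, s : Multiset α, and m : α a most frequent color of s (for all a : α, s.count a ≤ s.count m). Set n = Multiset.card s. Then the minimum number of bins in a valid capacity-L packing of s equals max (2 * s.count m - n) ((n + L - 1) / L) (natural-number truncated subtraction), i.e., the maximum of the discrepancy and ⌈n/L⌉. -/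
/-! A packing into `k` bins of capacity `L` forces `card s ≤ k * L`, and since a bin without equal
neighbours holds at most `⌈len / 2⌉` copies of a colour, also `2 * count a ≤ card s + k` for every
colour `a`. For odd `L = 2h + 1` these two bounds suffice, by induction on `k`: peel off one bin so
that the rest satisfies the bounds for `k - 1`. If some colour `m` has `2 * count m ≥ card s + 2`,
take the bin `m o₁ m o₂ … m` with up to `h` other items `oᵢ`; otherwise `s` can be laid out in a
line without equal neighbours, and the bin is its first `L` items. The optimum is therefore the
least `k` meeting both bounds. -/

namespace List

variable {α : Type*}

def alternateWith (x : α) : List α → List α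
  | [] => [x]
  | o :: t => x :: o :: alternateWith x t

@[simp]
theorem length_alternateWith (x : α) (l : List α) :
    (alternateWith x l).length = 2 * l.length + 1 := by
  induction l with
  | nil => rfl
  | cons o t ih => simp only [alternateWith, length_cons, ih]; ring

theorem coe_alternateWith (x : α) (l : List α) :
    (alternateWith x l : Multiset α) = Multiset.replicate (l.length + 1) x + l := by
  induction l with
  | nil => rfl
  | cons o t ih =>
    simp only [alternateWith, ← Multiset.cons_coe, ih, length_cons,
      Multiset.replicate_succ, ← Multiset.singleton_add]
    abel

theorem isChain_alternateWith {x : α} {l : List α} (hx : ∀ y ∈ l, y ≠ x) :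
    (alternateWith x l).IsChain (· ≠ ·) := by
  induction l with
  | nil => exact isChain_singleton x
  | cons o t ih =>
    have ho := hx o mem_cons_self
    have hhead : (alternateWith x t).head? = some x := by cases t <;> rfl
    refine isChain_cons_cons.mpr ⟨ho.symm, isChain_cons.mpr ⟨?_, ih ?_⟩⟩
    · intro y hy
      rw [hhead, Option.mem_some_iff] at hy
      exact hy ▸ ho
    · exact fun y hy => hx y (mem_cons_of_mem o hy)

theorem two_mul_count_le_length_add_one_of_isChain_ne_s10 [DecidableEq α] {a : α} :
    ∀ {l : List α}, l.IsChain (· ≠ ·) → 2 * l.count a ≤ l.length + 1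
  | [], _ => by simp
  | [b], _ => by simp only [count_singleton, length_singleton]; split <;> omega
  | b :: c :: t, h => by
    have ih := two_mul_count_le_length_add_one_of_isChain_ne_s10 (a := a) h.tail.tail
    have hbc : b ≠ c := (isChain_cons_cons.mp h).1
    simp only [count_cons, length_cons, beq_iff_eq]
    split_ifs <;> grind

end List

namespace Multiset

variable {α : Type*} [DecidableEq α]

theorem count_add_count_le_card_s10 {a b : α} (hab : a ≠ b) (t : Multiset α) :
    t.count a + t.count b ≤ card t := by
  induction t using Multiset.induction_on with
  | empty => simp
  | cons x t ih => simp only [count_cons, card_cons]; split_ifs <;> grind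

theorem two_mul_count_le_card_of_count_le_s10 {a b : α} (hab : a ≠ b) {t : Multiset α}
    (h : a ∈ t → t.count a ≤ t.count b) : 2 * t.count a ≤ card t := by
  by_cases hat : a ∈ t
  · have := t.count_add_count_le_card_s10 hab
    have := h hat
    omega
  · simp [count_eq_zero_of_notMem hat]

theorem two_mul_count_erase_le_s10 {t : Multiset α} (hbal : ∀ y, 2 * t.count y ≤ card t + 1) {a : α}
    (ha : a ∈ t) (hothers : ∀ y ≠ a, 2 * t.count y ≤ card t) :
    (∀ y, 2 * (t.erase a).count y ≤ card (t.erase a) + 1) ∧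
      2 * (t.erase a).count a ≤ card (t.erase a) := by
  have hcard := card_erase_add_one ha
  have hcount := count_pos.mpr ha
  refine ⟨fun y => ?_, ?_⟩
  · rcases eq_or_ne y a with rfl | hya
    · rw [count_erase_self]; have := hbal y; omega
    · rw [count_erase_of_ne hya]; have := hothers y hya; omega
  · rw [count_erase_self]; have := hbal a; omega

-- Greedy: start with a most frequent colour other than the forbidden one, then forbid it.
theorem exists_isChain_ne_head?_ne {t : Multiset α}
    (hbal : ∀ y, 2 * t.count y ≤ card t + 1) {b : α} (hb : 2 * t.count b ≤ card t) :
    ∃ l : List α, (l : Multiset α) = t ∧ l.IsChain (· ≠ ·) ∧ l.head? ≠ some b := by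
  induction hn : card t generalizing t b with
  | zero => exact ⟨[], (card_eq_zero.mp hn).symm, List.isChain_nil, by simp⟩
  | succ n ih =>
    have hne : t.filter (· ≠ b) ≠ 0 := by
      intro h0
      have : t.count b = card t := count_eq_card.mpr fun x hx => by
        by_contra hxb
        exact filter_eq_nil.mp h0 x hx (Ne.symm hxb)
      omega
    obtain ⟨a, ha, hamax⟩ := exists_max_image t.count hne
    obtain ⟨hat, hab⟩ := mem_filter.mp ha
    obtain ⟨hbal', ha'⟩ := two_mul_count_erase_le_s10 hbal hat fun y hya => by
      rcases eq_or_ne y b with rfl | hyb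
      · exact hb
      · exact two_mul_count_le_card_of_count_le_s10 hya fun hyt => hamax y (mem_filter.mpr ⟨hyt, hyb⟩)
    obtain ⟨l, hl, hchain, hhead⟩ := ih hbal' ha' (by have := card_erase_add_one hat; omega)
    refine ⟨a :: l, by rw [← cons_coe, hl, cons_erase hat], ?_, by simpa using hab⟩
    exact List.isChain_cons.mpr ⟨fun y hy hay => hhead (hay ▸ hy), hchain⟩

theorem exists_isChain_ne {t : Multiset α} (hbal : ∀ y, 2 * t.count y ≤ card t + 1) :
    ∃ l : List α, (l : Multiset α) = t ∧ l.IsChain (· ≠ ·) := by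
  rcases eq_or_ne t 0 with rfl | ht
  · exact ⟨[], rfl, List.isChain_nil⟩
  obtain ⟨a, hat, hamax⟩ := exists_max_image t.count ht
  obtain ⟨hbal', ha'⟩ := two_mul_count_erase_le_s10 hbal hat fun y hya =>
    two_mul_count_le_card_of_count_le_s10 hya (hamax y)
  obtain ⟨l, hl, hchain, hhead⟩ := exists_isChain_ne_head?_ne hbal' ha'
  refine ⟨a :: l, by rw [← cons_coe, hl, cons_erase hat], ?_⟩
  exact List.isChain_cons.mpr ⟨fun y hy hay => hhead (hay ▸ hy), hchain⟩

end Multiset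

section Packing

variable {α : Type*}

def IsPacking (L : ℕ) (s : Multiset α) (bins : List (List α)) : Prop :=
  (bins.map (fun b : List α => (b : Multiset α))).sum = s ∧
    ∀ b ∈ bins, b.length ≤ L ∧ b.IsChain (· ≠ ·)

def PackingBounds [DecidableEq α] (L k : ℕ) (s : Multiset α) : Prop :=
  Multiset.card s ≤ k * L ∧ ∀ a, 2 * s.count a ≤ Multiset.card s + k

variable {L k : ℕ} {s : Multiset α} {bins : List (List α)}

theorem IsPacking.nil : IsPacking L (0 : Multiset α) [] := ⟨rfl, by simp⟩

theorem IsPacking.cons {b : List α}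
    (hb : b.length ≤ L) (hchain : b.IsChain (· ≠ ·)) (h : IsPacking L s bins) :
    IsPacking L ((b : Multiset α) + s) (b :: bins) := by
  refine ⟨by rw [List.map_cons, List.sum_cons, h.1], ?_⟩
  intro b' hb'
  rcases List.mem_cons.mp hb' with rfl | hb'
  exacts [⟨hb, hchain⟩, h.2 b' hb']

variable [DecidableEq α]

theorem IsPacking.packingBounds (h : IsPacking L s bins) : PackingBounds L bins.length s := by
  induction bins generalizing s with
  | nil => obtain ⟨rfl, -⟩ := h; simp [PackingBounds]
  | cons b bins ih =>
    obtain ⟨rfl, hvalid⟩ := h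
    obtain ⟨hlen, hchain⟩ := hvalid b List.mem_cons_self
    obtain ⟨hcard, hcount⟩ := ih ⟨rfl, fun b' hb' => hvalid b' (List.mem_cons_of_mem b hb')⟩
    refine ⟨?_, fun a => ?_⟩
    · simp only [List.map_cons, List.sum_cons, Multiset.card_add, Multiset.coe_card,
        List.length_cons, add_mul, one_mul]
      omega
    · have := List.two_mul_count_le_length_add_one_of_isChain_ne_s10 (a := a) hchain
      have := hcount a
      simp only [List.map_cons, List.sum_cons, Multiset.card_add, Multiset.count_add,
        Multiset.coe_card, Multiset.coe_count, List.length_cons]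
      omega

theorem PackingBounds.exists_bin_of_balanced (hbounds : PackingBounds L (k + 1) s)
    (hbal : ∀ a, 2 * s.count a ≤ Multiset.card s + 1) :
    ∃ (b : List α) (s' : Multiset α), s = ↑b + s' ∧ b.length ≤ L ∧ b.IsChain (· ≠ ·) ∧
      PackingBounds L k s' := by
  obtain ⟨l, rfl, hl⟩ := Multiset.exists_isChain_ne hbal
  have hcard := hbounds.1
  simp only [Multiset.coe_card, add_mul, one_mul] at hcard
  refine ⟨l.take L, l.drop L, by rw [Multiset.coe_add, List.take_append_drop],
    List.length_take_le L l, hl.take L, ?_, fun a => ?_⟩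
  · rw [Multiset.coe_card, List.length_drop]; omega
  · have hchain := List.two_mul_count_le_length_add_one_of_isChain_ne_s10 (a := a) (hl.drop L)
    have := List.count_le_length (a := a) (l := l.drop L)
    rw [List.length_drop] at hchain this
    rw [Multiset.coe_count, Multiset.coe_card, List.length_drop]
    have hk : k = 0 → l.length ≤ L := by rintro rfl; simpa using hcard
    omega

theorem PackingBounds.exists_bin_of_majority {h : ℕ} (hL : L = 2 * h + 1)
    (hbounds : PackingBounds L (k + 1) s) {m : α} (hm : Multiset.card s + 2 ≤ 2 * s.count m) :
    ∃ (b : List α) (s' : Multiset α), s = ↑b + s' ∧ b.length ≤ L ∧ b.IsChain (· ≠ ·) ∧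
      PackingBounds L k s' := by
  -- The bin `m o₁ m … oₜ m` takes `t = min h others.length` other items; this lowers the
  -- discrepancy `2 * count m - card` by one, and any other colour is left with at most
  -- `others.length - t` items.
  set others := (s.filter (fun x => ¬x = m)).toList
  have hs : s = Multiset.replicate (s.count m) m + others := by
    rw [Multiset.coe_toList, ← Multiset.filter_eq' s m]
    exact (Multiset.filter_add_not _ s).symm
  have hothers : ∀ y ∈ others, y ≠ m := fun y hy =>
    (Multiset.mem_filter.mp (Multiset.mem_toList.mp hy)).2
  have hcard : Multiset.card s = s.count m + others.length := by
    conv_lhs => rw [hs]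
    simp
  have ht := List.length_take (i := h) (l := others)
  set t := (others.take h).length
  obtain ⟨hvolume, hdiscrepancy⟩ := hbounds
  have hk : k ≤ k * L := Nat.le_mul_of_pos_right k (by omega)
  have hm' := hdiscrepancy m
  rw [add_mul, one_mul] at hvolume
  refine ⟨List.alternateWith m (others.take h),
    Multiset.replicate (s.count m - t - 1) m + ↑(others.drop h), ?_, ?_,
    List.isChain_alternateWith fun y hy => hothers y (List.mem_of_mem_take hy), ?_, fun a => ?_⟩
  · rw [List.coe_alternateWith, add_add_add_comm, ← Multiset.replicate_add, Multiset.coe_add,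
      List.take_append_drop, show t + 1 + (s.count m - t - 1) = s.count m by omega]
    exact hs
  · rw [List.length_alternateWith]; omega
  · simp only [Multiset.card_add, Multiset.card_replicate, Multiset.coe_card, List.length_drop]
    omega
  · have := List.count_le_length (a := a) (l := others.drop h)
    simp only [Multiset.card_add, Multiset.card_replicate, Multiset.coe_card, List.length_drop,
      Multiset.count_add, Multiset.count_replicate, Multiset.coe_count] at this ⊢
    rcases eq_or_ne a m with rfl | ham
    · rw [List.count_eq_zero_of_not_mem fun ha => hothers a (List.mem_of_mem_drop ha) rfl]
      simp only [if_true]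
      omega
    · simp only [ham.symm, if_false]
      omega

theorem PackingBounds.exists_bin (hodd : Odd L) (hbounds : PackingBounds L (k + 1) s) :
    ∃ (b : List α) (s' : Multiset α), s = ↑b + s' ∧ b.length ≤ L ∧ b.IsChain (· ≠ ·) ∧
      PackingBounds L k s' := by
  obtain ⟨h, hL⟩ := hodd
  by_cases hmajority : ∃ m, Multiset.card s + 2 ≤ 2 * s.count m
  · obtain ⟨m, hm⟩ := hmajority
    exact hbounds.exists_bin_of_majority hL hm
  · push Not at hmajority
    exact hbounds.exists_bin_of_balanced fun a => by have := hmajority a; omega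

theorem PackingBounds.exists_isPacking (hodd : Odd L) (hbounds : PackingBounds L k s) :
    ∃ bins : List (List α), bins.length = k ∧ IsPacking L s bins := by
  induction k generalizing s with
  | zero =>
    obtain rfl : s = 0 := Multiset.card_eq_zero.mp (by simpa using hbounds.1)
    exact ⟨[], rfl, IsPacking.nil⟩
  | succ k ih =>
    obtain ⟨b, s', rfl, hlen, hchain, hbounds'⟩ := hbounds.exists_bin hodd
    obtain ⟨bins, rfl, hpacking⟩ := ih hbounds'
    exact ⟨b :: bins, rfl, hpacking.cons hlen hchain⟩

end Packing

theorem alternate_unit_optimal_odd_general {α : Type*} [DecidableEq α]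
    (L : ℕ) (hodd : Odd L) (s : Multiset α) (m : α)
    (hmax : ∀ a : α, s.count a ≤ s.count m) :
    (∃ bins : List (List α),
        bins.length = max (2 * s.count m - Multiset.card s)
          ((Multiset.card s + L - 1) / L) ∧
        (bins.map (fun b => (b : Multiset α))).sum = s ∧
        ∀ b ∈ bins, b.length ≤ L ∧ List.Chain' (· ≠ ·) b) ∧
    (∀ bins : List (List α),
        (bins.map (fun b => (b : Multiset α))).sum = s →
        (∀ b ∈ bins, b.length ≤ L ∧ List.Chain' (· ≠ ·) b) →
        max (2 * s.count m - Multiset.card s) ((Multiset.card s + L - 1) / L)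
          ≤ bins.length) := by
  -- `bins.map (fun b => (b : Multiset α))` elaborates as `List.map id` applied to the monadic
  -- lift of `bins`; bring it back to `bins.map (↑)`.
  simp only [List.pure_def, List.bind_eq_flatMap, List.map_id_fun', id_eq, ← List.map_eq_flatMap]
  set n := Multiset.card s
  set K := max (2 * s.count m - n) ((n + L - 1) / L)
  have hceil (k : ℕ) : (n + L - 1) / L ≤ k ↔ n ≤ k * L := by
    rw [← Nat.ceilDiv_eq_add_pred_div, ceilDiv_le_iff_le_mul hodd.pos, mul_comm]
  refine ⟨PackingBounds.exists_isPacking hodd ⟨?_, fun a => ?_⟩, fun bins hsum hvalid => ?_⟩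
  · exact (hceil K).mp (le_max_right _ _)
  · have := hmax a
    have := le_max_left (2 * s.count m - n) ((n + L - 1) / L)
    omega
  · obtain ⟨hvolume, hdiscrepancy⟩ := IsPacking.packingBounds ⟨hsum, hvalid⟩
    exact max_le (by have := hdiscrepancy m; omega) ((hceil _).mpr hvolume)

theorem alternate_unit_optimal_odd {α : Type*} [DecidableEq α]
    (L : ℕ) (hodd : Odd L) (hL : 3 ≤ L) (s : Multiset α) (m : α)
    (hmax : ∀ a : α, s.count a ≤ s.count m) :
    (∃ bins : List (List α),
        bins.length = max (2 * s.count m - Multiset.card s)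
          ((Multiset.card s + L - 1) / L) ∧
        (bins.map (fun b => (b : Multiset α))).sum = s ∧
        ∀ b ∈ bins, b.length ≤ L ∧ List.Chain' (· ≠ ·) b) ∧
    (∀ bins : List (List α),
        (bins.map (fun b => (b : Multiset α))).sum = s →
        (∀ b ∈ bins, b.length ≤ L ∧ List.Chain' (· ≠ ·) b) →
        max (2 * s.count m - Multiset.card s) ((Multiset.card s + L - 1) / L)
          ≤ bins.length) :=
  alternate_unit_optimal_odd_general L hodd s m hmax
end
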